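/- The class of submodular valuations is not closed under OR: there exist submodular valuations u, w on a three-element set such that u∨w, defined by (u∨w)(S) = max over T ⊆ S of u(T)+w(S∖T), is not submodular. Concretely, take u the budget-limited additive valuation with weights u(1)=3, u(2)=5, u(3)=3 and budget 6, and w the additive valuation w(1)=1, w(2)=2, w(3)=0; then (u∨w)({1,2}) + (u∨w)({2,3}) < (u∨w)({1,2,3}) + (u∨w)({2}). -/

import Mathlib

/-!
Each of the four splits of `{1,2}` and of `{2,3}` is worth at most 6, while on `{1,2,3}`
giving `{1,3}` to `u` (worth 6, the budget) and `2` to `w` (worth 2) reaches 8, and `(u∨w)({2}) ≥ u({2}) = 5`;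
hence `6 + 6 < 8 + 5`. (The items `1, 2, 3` are `0, 1, 2 : Fin 3`.)
-/

/-- The OR combination of two valuations. -/
noncomputable def orVal {X : Type*} [DecidableEq X]
    (u w : Finset X → ℝ) (S : Finset X) : ℝ :=
  S.powerset.sup' (Finset.powerset_nonempty S) (fun T => u T + w (S \ T))

namespace Finset

variable {α : Type*} [DecidableEq α]

theorem subset_pair_iff {s : Finset α} {a b : α} :
    s ⊆ {a, b} ↔ s = ∅ ∨ s = {a} ∨ s = {b} ∨ s = {a, b} := by
  rw [← mem_powerset, powerset_insert]
  simp only [mem_union, mem_image, mem_powerset, subset_singleton_iff]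
  aesop

end Finset

section

variable {X : Type*} [DecidableEq X] {u w : Finset X → ℝ} {S T : Finset X} {c : ℝ}

theorem le_orVal (h : T ⊆ S) : u T + w (S \ T) ≤ orVal u w S :=
  Finset.le_sup' (fun T => u T + w (S \ T)) (Finset.mem_powerset.2 h)

theorem orVal_le_iff : orVal u w S ≤ c ↔ ∀ T ⊆ S, u T + w (S \ T) ≤ c := by
  simp [orVal, Finset.sup'_le_iff]

theorem orVal_pair_le {i j : X} (hij : i ≠ j) (h₀ : u ∅ + w {i, j} ≤ c)
    (hi : u {i} + w {j} ≤ c) (hj : u {j} + w {i} ≤ c) (hij' : u {i, j} + w ∅ ≤ c) :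
    orVal u w {i, j} ≤ c := by
  refine orVal_le_iff.2 fun T hT => ?_
  rcases Finset.subset_pair_iff.1 hT with rfl | rfl | rfl | rfl
  · simpa using h₀
  · simpa [Finset.sdiff_singleton_eq_erase, Finset.erase_insert, hij] using hi
  · simpa [Finset.sdiff_singleton_eq_erase, Finset.erase_insert_of_ne, hij] using hj
  · simpa using hij'

end

/-- submodular valuations are not closed under OR. With
`u(S) = min(6, Σ_{i∈S} uᵢ)` for weights `(3,5,3)` and `w` additive with
weights `(1,2,0)`, the OR `u∨w` violates submodularity:
`(u∨w)({1,2}) + (u∨w)({2,3}) < (u∨w)({1,2,3}) + (u∨w)({2})`. -/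
theorem submodular_not_closed_under_or :
    let u : Finset (Fin 3) → ℝ := fun S => min 6 (∑ i ∈ S, ![(3 : ℝ), 5, 3] i)
    let w : Finset (Fin 3) → ℝ := fun S => ∑ i ∈ S, ![(1 : ℝ), 2, 0] i
    orVal u w {0, 1} + orVal u w {1, 2} <
      orVal u w {0, 1, 2} + orVal u w {1} := by
  intro u w
  have h₀₁ : orVal u w {0, 1} ≤ 6 := by
    apply orVal_pair_le (by decide) <;>
      norm_num +decide [u, w, Finset.sum_insert, Matrix.cons_val_two]
  have h₁₂ : orVal u w {1, 2} ≤ 6 := by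
    apply orVal_pair_le (by decide) <;>
      norm_num +decide [u, w, Finset.sum_insert, Matrix.cons_val_two]
  have h₀₁₂ : 8 ≤ orVal u w {0, 1, 2} := by
    have hsplit : ({0, 1, 2} : Finset (Fin 3)) \ {0, 2} = {1} := by decide
    calc 8 = u {0, 2} + w {1} := by
          norm_num +decide [u, w, Finset.sum_insert, Matrix.cons_val_two]
      _ ≤ _ := hsplit ▸ le_orVal (by decide)
  have h₁ : 5 ≤ orVal u w {1} :=
    calc 5 = u {1} + w ({1} \ {1}) := by norm_num [u, w]
      _ ≤ _ := le_orVal subset_rfl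
  linarith
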